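/- Assume v ≤ v₀ and |θ₀ − m| ≤ δ₀, where v₀ > 0 and δ₀ ≥ 0 are known prior bounds. Then for every α > 0 and every ε ∈ (0,1), with probability at least 1 − 2ε, |θ̂_α(θ₀) − m| ≤ α v₀ / 2 + log(ε⁻¹)/(n α) + (α² δ₀ / 2)(1 + α δ₀)(δ₀²/3 + v₀). -/

import Mathlib

open MeasureTheory ProbabilityTheory

/-- The threshold function `T(x) = (1/2) log ((1 + x + x²/2)/(1 - x + x²/2))`. -/
noncomputable def threshT (x : ℝ) : ℝ :=
  (1 / 2) * Real.log ((1 + x + x ^ 2 / 2) / (1 - x + x ^ 2 / 2))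

/-- The truncated mean estimator
`θ̂_α(θ₀) = θ₀ + (1/(n α)) ∑ᵢ T (α (Yᵢ - θ₀))` computed on a sample `Y : Fin n → ℝ`. -/
noncomputable def thetaHat (n : ℕ) (α θ₀ : ℝ) (Y : Fin n → ℝ) : ℝ :=
  θ₀ + (1 / (n * α)) * ∑ i, threshT (α * (Y i - θ₀))

/-!
Catoni's argument. Since `exp (T x) ≤ 1 + x + x²/2` and `T` is odd, for `β = ±α` the
exponential moment of `T (β (Y - θ₀))` is at most `1 + t + t²/2 + β² v/2` with
`t = β (m - θ₀)`. By independence and the exponential Markov inequality, each of the sums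
`∑ᵢ T (±α (Yᵢ - θ₀))` exceeds `n log (1 + t + t²/2 + β² v/2) + log ε⁻¹` with probability at
most `ε`. The elementary inequality
`log (1 + t + t²/2 + r) ≤ t + r + (1 + |t|) (r |t| + |t|³/6)` for `r ≥ 0`, applied with
`|t| ≤ α δ₀` and `r ≤ α² v₀/2`, turns the two one-sided bounds into the two sides of the
deviation bound.
-/

open Real

lemma one_add_add_sq_div_two_pos (x : ℝ) : 0 < 1 + x + x ^ 2 / 2 := by
  nlinarith [sq_nonneg (x + 1)]

lemma threshT_neg (x : ℝ) : threshT (-x) = -threshT x := by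
  rw [threshT, threshT, ← mul_neg, ← log_inv, inv_div]
  ring_nf

lemma exp_threshT_le (x : ℝ) : exp (threshT x) ≤ 1 + x + x ^ 2 / 2 := by
  have hA := one_add_add_sq_div_two_pos x
  have hB : 0 < 1 - x + x ^ 2 / 2 := by
    simpa [sub_eq_add_neg] using one_add_add_sq_div_two_pos (-x)
  have hprod : 0 ≤ log (1 + x + x ^ 2 / 2) + log (1 - x + x ^ 2 / 2) := by
    rw [← log_mul hA.ne' hB.ne']
    exact log_nonneg (by nlinarith [sq_nonneg (x ^ 2)])
  rw [← le_log_iff_exp_le hA, threshT, log_div hA.ne' hB.ne']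
  linarith

@[fun_prop]
lemma measurable_threshT : Measurable threshT := by
  unfold threshT; fun_prop

lemma log_add_le_log_add_div {x r : ℝ} (hx : 0 < x) (hxr : 0 < x + r) :
    log (x + r) ≤ log x + r / x := by
  have h := log_le_sub_one_of_pos (div_pos hxr hx)
  rw [log_div hxr.ne' hx.ne', add_div, div_self hx.ne'] at h
  linarith

lemma log_one_sub_add_sq_div_two_le {a : ℝ} (ha : 0 ≤ a) :
    log (1 - a + a ^ 2 / 2) ≤ -a + (1 + a) * a ^ 3 / 6 := by
  have hpos (x : ℝ) : 0 < 1 - x + x ^ 2 / 2 := by nlinarith [sq_nonneg (x - 1)]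
  set g : ℝ → ℝ := fun x => -x + (1 + x) * x ^ 3 / 6 - log (1 - x + x ^ 2 / 2)
  have hderiv (x : ℝ) : HasDerivAt g
      (-1 + (x ^ 3 + 3 * (1 + x) * x ^ 2) / 6 - (-1 + x) / (1 - x + x ^ 2 / 2)) x := by
    have hq : HasDerivAt (fun x : ℝ => 1 - x + x ^ 2 / 2) (-1 + x) x :=
      (((hasDerivAt_id' x).const_sub 1).add ((hasDerivAt_pow 2 x).div_const 2)).congr_deriv
        (by norm_num)
    have hc : HasDerivAt (fun x : ℝ => (1 + x) * x ^ 3 / 6)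
        ((x ^ 3 + 3 * (1 + x) * x ^ 2) / 6) x :=
      ((((hasDerivAt_id' x).const_add 1).mul (hasDerivAt_pow 3 x)).div_const 6).congr_deriv
        (by norm_num; ring)
    exact ((hasDerivAt_id' x).neg.add hc).sub (hq.log (hpos x).ne')
  have hmono : MonotoneOn g (Set.Ici 0) := by
    refine monotoneOn_of_hasDerivWithinAt_nonneg (convex_Ici 0)
      (fun x _ => (hderiv x).continuousAt.continuousWithinAt)
      (fun x _ => (hderiv x).hasDerivWithinAt) fun x hx => ?_
    rw [interior_Ici, Set.mem_Ioi] at hx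
    have key : (-1 + x) / (1 - x + x ^ 2 / 2) ≤ -1 + (x ^ 3 + 3 * (1 + x) * x ^ 2) / 6 := by
      -- the difference of the two sides is `x³ (4x² - 5x + 2) / 12`
      rw [div_le_iff₀ (hpos x)]
      nlinarith [mul_nonneg (pow_pos hx 3).le (sq_nonneg (x - 5 / 8)), pow_pos hx 3]
    linarith
  have h0 : g 0 = 0 := by simp [g]
  have := hmono (Set.mem_Ici.mpr le_rfl) (Set.mem_Ici.mpr ha) ha
  simp only [h0, g] at this
  linarith

lemma log_one_add_add_sq_div_two_add_le (t : ℝ) {r : ℝ} (hr : 0 ≤ r) :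
    log (1 + t + t ^ 2 / 2 + r) ≤ t + r + (1 + |t|) * (r * |t| + |t| ^ 3 / 6) := by
  have hA := one_add_add_sq_div_two_pos t
  have hsplit := log_add_le_log_add_div (r := r) hA (by linarith)
  rcases le_or_gt 0 t with ht | ht
  · have hlog : log (1 + t + t ^ 2 / 2) ≤ t :=
      (log_le_iff_le_exp hA).mpr (quadratic_le_exp_of_nonneg ht)
    have hdiv : r / (1 + t + t ^ 2 / 2) ≤ r :=
      div_le_self hr (by nlinarith)
    rw [abs_of_nonneg ht]
    nlinarith [mul_nonneg hr ht, pow_nonneg ht 3]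
  · set a := -t with ha
    have ha0 : 0 ≤ a := by linarith
    have hA' : 1 + t + t ^ 2 / 2 = 1 - a + a ^ 2 / 2 := by rw [ha]; ring
    have hdiv : r / (1 - a + a ^ 2 / 2) ≤ r * (1 + a + a ^ 2) := by
      rw [div_le_iff₀ (hA' ▸ hA)]
      nlinarith [mul_nonneg hr (mul_nonneg (sq_nonneg a) (sq_nonneg (a - 1 / 2)))]
    rw [hA'] at hsplit ⊢
    rw [abs_of_neg ht, ← ha]
    nlinarith [log_one_sub_add_sq_div_two_le ha0]

section Moments

variable {μ : Measure ℝ} [IsProbabilityMeasure μ]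

lemma integrable_id_of_integrable_sq (hL2 : Integrable (fun y => y ^ 2) μ) :
    Integrable (fun y : ℝ => y) μ :=
  ((memLp_two_iff_integrable_sq aestronglyMeasurable_id).mpr hL2).integrable one_le_two

lemma integrable_quadratic (hL2 : Integrable (fun y => y ^ 2) μ) (a b c : ℝ) :
    Integrable (fun y => a * y ^ 2 + b * y + c) μ :=
  ((hL2.const_mul a).fun_add ((integrable_id_of_integrable_sq hL2).const_mul b)).fun_add
    (integrable_const c)

lemma integral_quadratic (hL2 : Integrable (fun y => y ^ 2) μ) (a b c : ℝ) :
    ∫ y, a * y ^ 2 + b * y + c ∂μ = a * ∫ y, y ^ 2 ∂μ + b * ∫ y, y ∂μ + c := by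
  have hL1 := integrable_id_of_integrable_sq hL2
  rw [integral_add ((hL2.const_mul a).fun_add (hL1.const_mul b)) (integrable_const c),
    integral_add (hL2.const_mul a) (hL1.const_mul b), integral_const_mul, integral_const_mul,
    integral_const]
  simp

lemma integral_sub_sq_eq (hL2 : Integrable (fun y => y ^ 2) μ) (θ : ℝ) :
    ∫ y, (y - θ) ^ 2 ∂μ = ∫ y, y ^ 2 ∂μ - 2 * θ * ∫ y, y ∂μ + θ ^ 2 := by
  have hexpand : (fun y : ℝ => (y - θ) ^ 2) = fun y => 1 * y ^ 2 + -(2 * θ) * y + θ ^ 2 := by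
    ext y; ring
  rw [hexpand, integral_quadratic hL2]
  ring

lemma exp_threshT_le_quadratic (β θ₀ y : ℝ) :
    exp (threshT (β * (y - θ₀))) ≤
      β ^ 2 / 2 * y ^ 2 + (β - β ^ 2 * θ₀) * y + (1 - β * θ₀ + (β * θ₀) ^ 2 / 2) :=
  (exp_threshT_le _).trans_eq (by ring)

lemma integrable_exp_threshT (hL2 : Integrable (fun y => y ^ 2) μ) (β θ₀ : ℝ) :
    Integrable (fun y => exp (threshT (β * (y - θ₀)))) μ := by
  refine (integrable_quadratic hL2 (β ^ 2 / 2) (β - β ^ 2 * θ₀)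
    (1 - β * θ₀ + (β * θ₀) ^ 2 / 2)).mono' (by fun_prop : Measurable _).aestronglyMeasurable
    (ae_of_all _ fun y => ?_)
  rw [norm_of_nonneg (exp_pos _).le]
  exact exp_threshT_le_quadratic β θ₀ y

lemma integral_exp_threshT_le (hL2 : Integrable (fun y => y ^ 2) μ)
    {m v : ℝ} (hm : m = ∫ y, y ∂μ) (hv : v = ∫ y, (y - m) ^ 2 ∂μ) (β θ₀ : ℝ) :
    ∫ y, exp (threshT (β * (y - θ₀))) ∂μ ≤
      1 + β * (m - θ₀) + (β * (m - θ₀)) ^ 2 / 2 + β ^ 2 * v / 2 := by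
  have hmoment : ∫ y, y ^ 2 ∂μ = v + m ^ 2 := by
    rw [hv, integral_sub_sq_eq hL2, ← hm]; ring
  calc ∫ y, exp (threshT (β * (y - θ₀))) ∂μ
      ≤ ∫ y, β ^ 2 / 2 * y ^ 2 + (β - β ^ 2 * θ₀) * y + (1 - β * θ₀ + (β * θ₀) ^ 2 / 2) ∂μ :=
        integral_mono (integrable_exp_threshT hL2 β θ₀) (integrable_quadratic hL2 _ _ _)
          (exp_threshT_le_quadratic β θ₀)
    _ = _ := by rw [integral_quadratic hL2, hmoment, ← hm]; ring

end Moments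

section Chernoff

variable {Ω : Type*} [MeasurableSpace Ω] {P : Measure Ω} [IsProbabilityMeasure P]
  {ι : Type*} [Fintype ι] {Y : ι → Ω → ℝ} {μ : Measure ℝ}

lemma measure_sum_comp_ge_le (hYmeas : ∀ i, Measurable (Y i)) (hindep : iIndepFun Y P)
    (hid : ∀ i, P.map (Y i) = μ) {g : ℝ → ℝ} (hg : Measurable g)
    (hint : Integrable (fun y => exp (g y)) μ) {R : ℝ} (hR : 0 < R)
    (hgR : ∫ y, exp (g y) ∂μ ≤ R) {ε : ℝ} (hε : 0 < ε) :
    P {ω | Fintype.card ι * log R + log ε⁻¹ ≤ ∑ i, g (Y i ω)} ≤ ENNReal.ofReal ε := by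
  set X : ι → Ω → ℝ := fun i => g ∘ Y i
  have hXmeas (i : ι) : Measurable (X i) := hg.comp (hYmeas i)
  have hXindep : iIndepFun X P := hindep.comp (fun _ => g) fun _ => hg
  have hexp_meas : AEStronglyMeasurable (fun y => exp (g y)) μ := hint.aestronglyMeasurable
  have hXint (i : ι) : Integrable (fun ω => exp (1 * X i ω)) P := by
    rw [← hid i] at hint hexp_meas
    simp only [one_mul]
    exact (integrable_map_measure hexp_meas (hYmeas i).aemeasurable).mp hint
  have hmgf (i : ι) : mgf (X i) P 1 = ∫ y, exp (g y) ∂μ := by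
    rw [← hid i] at hexp_meas ⊢
    simp [mgf, integral_map (hYmeas i).aemeasurable hexp_meas, X]
  have hmgf_sum : mgf (∑ i, X i) P 1 ≤ R ^ Fintype.card ι := by
    rw [hXindep.mgf_sum hXmeas, ← Finset.card_univ, ← Finset.prod_const]
    exact Finset.prod_le_prod (fun i _ => mgf_nonneg) fun i _ => (hmgf i).trans_le hgR
  have hchernoff := measure_ge_le_exp_mul_mgf (Fintype.card ι * log R + log ε⁻¹) zero_le_one
    (hXindep.integrable_exp_mul_sum hXmeas (s := Finset.univ) fun i _ => hXint i)
  have hbound : exp (-1 * (Fintype.card ι * log R + log ε⁻¹)) * R ^ Fintype.card ι = ε := by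
    rw [neg_one_mul, neg_add, exp_add, exp_neg, exp_neg, ← log_rpow hR, exp_log (by positivity),
      exp_log (inv_pos.mpr hε), Real.rpow_natCast]
    field_simp
  rw [ENNReal.le_ofReal_iff_toReal_le (measure_ne_top _ _) hε.le, ← measureReal_def]
  refine le_trans ?_ (hchernoff.trans
    ((mul_le_mul_of_nonneg_left hmgf_sum (exp_pos _).le).trans_eq hbound))
  simp [Finset.sum_apply, X]

end Chernoff

lemma log_one_add_add_sq_div_two_add_le_of_le {t r α δ₀ v₀ : ℝ} (ht : |t| ≤ α * δ₀)
    (hr : 0 ≤ r) (hrv : r ≤ α ^ 2 * v₀ / 2) :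
    log (1 + t + t ^ 2 / 2 + r) ≤
      t + α * (α * v₀ / 2 + α ^ 2 * δ₀ / 2 * (1 + α * δ₀) * (δ₀ ^ 2 / 3 + v₀)) := by
  have hαδ₀ : 0 ≤ α * δ₀ := (abs_nonneg t).trans ht
  have hαv₀ : 0 ≤ α ^ 2 * v₀ / 2 := hr.trans hrv
  calc log (1 + t + t ^ 2 / 2 + r) ≤ t + r + (1 + |t|) * (r * |t| + |t| ^ 3 / 6) :=
        log_one_add_add_sq_div_two_add_le t hr
    _ ≤ t + α ^ 2 * v₀ / 2 +
          (1 + α * δ₀) * (α ^ 2 * v₀ / 2 * (α * δ₀) + (α * δ₀) ^ 3 / 6) := by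
        gcongr
    _ = _ := by ring

lemma abs_thetaHat_sub_le {n : ℕ} (hn : 0 < n) {α : ℝ} (hα : 0 < α) {θ₀ m K L : ℝ}
    (y : Fin n → ℝ)
    (hup : ∑ i, threshT (α * (y i - θ₀)) < n * (α * (m - θ₀) + α * K) + L)
    (hlow : ∑ i, threshT (-α * (y i - θ₀)) < n * (-α * (m - θ₀) + α * K) + L) :
    |thetaHat n α θ₀ y - m| ≤ K + L / (n * α) := by
  set S := ∑ i, threshT (α * (y i - θ₀))
  have hlow' : -S < n * (-α * (m - θ₀) + α * K) + L := by
    simpa only [neg_mul, threshT_neg, Finset.sum_neg_distrib] using hlow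
  have hnα : 0 < (n : ℝ) * α := mul_pos (Nat.cast_pos.mpr hn) hα
  have hθ : thetaHat n α θ₀ y - m = (n * α * (θ₀ - m) + S) / (n * α) := by
    rw [thetaHat]; field_simp; ring
  have hK : K + L / (n * α) = (n * α * K + L) / (n * α) := by
    field_simp
  rw [hθ, hK, abs_div, abs_of_pos hnα, div_le_div_iff_of_pos_right hnα, abs_le]
  constructor <;> linarith

lemma ofReal_one_sub_le_measure {Ω : Type*} [MeasurableSpace Ω] {P : Measure Ω}
    [IsProbabilityMeasure P] {s : Set Ω} {δ : ℝ} (hδ : 0 ≤ δ) (h : P sᶜ ≤ ENNReal.ofReal δ) :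
    ENNReal.ofReal (1 - δ) ≤ P s :=
  calc ENNReal.ofReal (1 - δ) = 1 - ENNReal.ofReal δ := by
        rw [ENNReal.ofReal_sub _ hδ, ENNReal.ofReal_one]
    _ ≤ 1 - P sᶜ := tsub_le_tsub_left h 1
    _ ≤ P s := by
        rw [tsub_le_iff_right, ← measure_univ (μ := P), ← Set.union_compl_self s]
        exact measure_union_le s sᶜ

lemma measure_sum_threshT_ge_le {Ω : Type*} [MeasurableSpace Ω] {P : Measure Ω}
    [IsProbabilityMeasure P] {ι : Type*} [Fintype ι] {Y : ι → Ω → ℝ}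
    (hYmeas : ∀ i, Measurable (Y i)) (hindep : iIndepFun Y P) {μ : Measure ℝ}
    [IsProbabilityMeasure μ] (hid : ∀ i, P.map (Y i) = μ) (hL2 : Integrable (fun y => y ^ 2) μ)
    {m v : ℝ} (hm : m = ∫ y, y ∂μ) (hv : v = ∫ y, (y - m) ^ 2 ∂μ) (β θ₀ : ℝ) {ε : ℝ}
    (hε : 0 < ε) :
    P {ω | Fintype.card ι * log (1 + β * (m - θ₀) + (β * (m - θ₀)) ^ 2 / 2 + β ^ 2 * v / 2) +
        log ε⁻¹ ≤ ∑ i, threshT (β * (Y i ω - θ₀))} ≤ ENNReal.ofReal ε := by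
  have hv_nonneg : 0 ≤ v := hv ▸ integral_nonneg fun y => sq_nonneg _
  have hR : 0 < 1 + β * (m - θ₀) + (β * (m - θ₀)) ^ 2 / 2 + β ^ 2 * v / 2 := by
    have := one_add_add_sq_div_two_pos (β * (m - θ₀))
    positivity
  exact measure_sum_comp_ge_le hYmeas hindep hid (by fun_prop) (integrable_exp_threshT hL2 β θ₀)
    hR (integral_exp_threshT_le hL2 hm hv β θ₀) hε

theorem truncated_mean_deviation_general
    {Ω : Type*} [MeasurableSpace Ω] (P : Measure Ω) [IsProbabilityMeasure P]
    (n : ℕ) (hn : 0 < n) (Y : Fin n → Ω → ℝ) (hYmeas : ∀ i, Measurable (Y i))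
    (μ : Measure ℝ) [IsProbabilityMeasure μ]
    (hindep : iIndepFun Y P)
    (hid : ∀ i, Measure.map (Y i) P = μ)
    (hL2 : Integrable (fun y => y ^ 2) μ)
    (m v : ℝ) (hm : m = ∫ y, y ∂μ) (hv : v = ∫ y, (y - m) ^ 2 ∂μ)
    (v₀ δ₀ : ℝ) (hvle : v ≤ v₀)
    (θ₀ : ℝ) (hθ₀ : |θ₀ - m| ≤ δ₀)
    (α : ℝ) (hα : 0 < α) (ε : ℝ) (hε : ε ∈ Set.Ioo (0 : ℝ) 1) :
    ENNReal.ofReal (1 - 2 * ε) ≤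
      P {ω | |thetaHat n α θ₀ (fun i => Y i ω) - m| ≤
        α * v₀ / 2 + Real.log ε⁻¹ / (n * α) +
          α ^ 2 * δ₀ / 2 * (1 + α * δ₀) * (δ₀ ^ 2 / 3 + v₀)} := by
  obtain ⟨hε0, -⟩ := hε
  have hv_nonneg : 0 ≤ v := hv ▸ integral_nonneg fun y => sq_nonneg _
  set K := α * v₀ / 2 + α ^ 2 * δ₀ / 2 * (1 + α * δ₀) * (δ₀ ^ 2 / 3 + v₀) with hK
  have hlog (β : ℝ) (hβ : |β| = α) :
      log (1 + β * (m - θ₀) + (β * (m - θ₀)) ^ 2 / 2 + β ^ 2 * v / 2) ≤ β * (m - θ₀) + α * K := by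
    refine log_one_add_add_sq_div_two_add_le_of_le ?_ (by positivity) ?_
    · rw [abs_mul, hβ, abs_sub_comm]
      exact mul_le_mul_of_nonneg_left hθ₀ hα.le
    · rw [← sq_abs, hβ]
      gcongr
  have hup := measure_sum_threshT_ge_le hYmeas hindep hid hL2 hm hv α θ₀ hε0
  have hlow := measure_sum_threshT_ge_le hYmeas hindep hid hL2 hm hv (-α) θ₀ hε0
  refine ofReal_one_sub_le_measure (by positivity) ((measure_mono fun ω hω => ?_).trans
    ((measure_union_le _ _).trans ((add_le_add hup hlow).trans_eq ?_)))
  · by_contra hbad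
    simp only [Set.mem_union, Set.mem_ofPred_eq, not_or, not_le, Fintype.card_fin] at hbad
    have hdev := abs_thetaHat_sub_le hn hα (fun i => Y i ω)
      (hbad.1.trans_le (by gcongr; exact hlog α (abs_of_pos hα)))
      (hbad.2.trans_le (by gcongr; exact hlog (-α) (by rw [abs_neg, abs_of_pos hα])))
    exact hω (by rw [Set.mem_ofPred_eq]; linarith)
  · rw [← ENNReal.ofReal_add hε0.le hε0.le, two_mul]

/-- Proposition 1.1: if `v ≤ v₀` and `|θ₀ - m| ≤ δ₀`, then for every `α > 0` and
`ε ∈ (0,1)`, with probability at least `1 - 2ε`,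
`|θ̂_α(θ₀) - m| ≤ α v₀/2 + log (ε⁻¹)/(n α) + (α² δ₀/2)(1 + α δ₀)(δ₀²/3 + v₀)`. -/
theorem truncated_mean_deviation
    {Ω : Type*} [MeasurableSpace Ω] (P : Measure Ω) [IsProbabilityMeasure P]
    (n : ℕ) (hn : 0 < n) (Y : Fin n → Ω → ℝ) (hYmeas : ∀ i, Measurable (Y i))
    (μ : Measure ℝ) [IsProbabilityMeasure μ]
    (hindep : iIndepFun Y P)
    (hid : ∀ i, Measure.map (Y i) P = μ)
    (hL2 : Integrable (fun y => y ^ 2) μ)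
    (m v : ℝ) (hm : m = ∫ y, y ∂μ) (hv : v = ∫ y, (y - m) ^ 2 ∂μ)
    (v₀ δ₀ : ℝ) (hv₀ : 0 < v₀) (hδ₀ : 0 ≤ δ₀) (hvle : v ≤ v₀)
    (θ₀ : ℝ) (hθ₀ : |θ₀ - m| ≤ δ₀)
    (α : ℝ) (hα : 0 < α) (ε : ℝ) (hε : ε ∈ Set.Ioo (0 : ℝ) 1) :
    ENNReal.ofReal (1 - 2 * ε) ≤
      P {ω | |thetaHat n α θ₀ (fun i => Y i ω) - m| ≤
        α * v₀ / 2 + Real.log ε⁻¹ / (n * α) +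
          α ^ 2 * δ₀ / 2 * (1 + α * δ₀) * (δ₀ ^ 2 / 3 + v₀)} :=
  truncated_mean_deviation_general P n hn Y hYmeas μ hindep hid hL2 m v hm hv v₀ δ₀ hvle θ₀ hθ₀ α hα
    ε hε
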